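/- (Proposition 3.4) Suppose a discrete form Ω : ℤ⁴ → Cl satisfies the discrete Joyce equation iDΩ = mΩe₀. Then Ω = ΩP_{+0} + ΩP_{−0}, where ΩP_{+0} satisfies the discrete Dirac–Kähler equation iD(ΩP_{+0}) = m(ΩP_{+0}), while ΩP_{−0} satisfies the same equation with reversed mass sign: iD(ΩP_{−0}) = −m(ΩP_{−0}). -/

import Mathlib

/-!
Right multiplication by a constant Clifford element commutes with the discrete Dirac operator,
which acts from the left. Hence `Ω ↦ Ω c` carries the Joyce equation `iDΩ = mΩe₀` to
`iD(Ωc) = mΩ(e₀c)`, and `P_{±0}` are the eigenvectors `e₀P_{±0} = ±P_{±0}` of left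
multiplication by `e₀`, summing to `1`.
-/

noncomputable section

/-- The Minkowski quadratic form `Q v = v₀² − v₁² − v₂² − v₃²` on `ℂ⁴`. -/
def Q : QuadraticForm ℂ (Fin 4 → ℂ) :=
  QuadraticMap.weightedSumSquares ℂ ![(1 : ℂ), -1, -1, -1]

/-- The Clifford algebra of spacetime over `ℂ`. -/
abbrev Cl : Type := CliffordAlgebra Q

/-- The generators `e_μ`, images of the standard basis vectors. -/
def e (μ : Fin 4) : Cl := CliffordAlgebra.ι Q (Pi.single μ 1)

/-- The volume element `e = e₀e₁e₂e₃`. -/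
def eV : Cl := e 0 * e 1 * e 2 * e 3

/-- The difference operator `(Δ_μ Ω)(k) = Ω(k + 1_μ) − Ω(k)`. -/
def Δ (μ : Fin 4) (Ω : (Fin 4 → ℤ) → Cl) : (Fin 4 → ℤ) → Cl :=
  fun k => Ω (k + Pi.single μ 1) - Ω k

/-- The discrete Dirac operator `DΩ = Σ_μ e_μ · (Δ_μ Ω)`. -/
def Dirac (Ω : (Fin 4 → ℤ) → Cl) : (Fin 4 → ℤ) → Cl :=
  fun k => ∑ μ : Fin 4, e μ * Δ μ Ω k

def P0p : Cl := (2⁻¹ : ℂ) • (1 + e 0)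
def P0m : Cl := (2⁻¹ : ℂ) • (1 - e 0)

lemma e_mul_self (μ : Fin 4) : e μ * e μ = algebraMap ℂ Cl (![1, -1, -1, -1] μ) := by
  rw [e, CliffordAlgebra.ι_sq_scalar]
  congr 1
  fin_cases μ <;> simp [Q, QuadraticMap.weightedSumSquares_apply, Fin.sum_univ_four]

lemma e_zero_mul_self : e 0 * e 0 = 1 := by
  simp [e_mul_self]

lemma P0p_add_P0m : P0p + P0m = 1 := by
  rw [P0p, P0m, ← smul_add, add_add_sub_cancel, ← two_smul ℂ, smul_smul,
    inv_mul_cancel₀ two_ne_zero, one_smul]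

lemma e_zero_mul_P0p : e 0 * P0p = P0p := by
  rw [P0p, mul_smul_comm, mul_add, mul_one, e_zero_mul_self, add_comm]

lemma e_zero_mul_P0m : e 0 * P0m = -P0m := by
  rw [P0m, mul_smul_comm, mul_sub, mul_one, e_zero_mul_self, ← smul_neg, neg_sub]

lemma Dirac_mul_const (Ω : (Fin 4 → ℤ) → Cl) (c : Cl) (k : Fin 4 → ℤ) :
    Dirac (fun k => Ω k * c) k = Dirac Ω k * c := by
  simp only [Dirac, Δ, Finset.sum_mul, sub_mul, mul_assoc]

lemma joyce_mul_const {m : ℂ} {Ω : (Fin 4 → ℤ) → Cl}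
    (hΩ : ∀ k, Complex.I • Dirac Ω k = m • (Ω k * e 0)) (c : Cl) (k : Fin 4 → ℤ) :
    Complex.I • Dirac (fun k => Ω k * c) k = m • (Ω k * (e 0 * c)) := by
  rw [Dirac_mul_const, ← smul_mul_assoc, hΩ, smul_mul_assoc, mul_assoc]

/-- Proposition 3.4: a solution `Ω` of the discrete Joyce equation `iDΩ = mΩe₀`
decomposes as `Ω = ΩP_{+0} + ΩP_{−0}`, where `ΩP_{+0}` satisfies the discrete
Dirac–Kähler equation and `ΩP_{−0}` satisfies it with reversed mass sign. -/
theorem stmt_6 (m : ℝ) (Ω : (Fin 4 → ℤ) → Cl)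
    (hΩ : ∀ k, Complex.I • Dirac Ω k = (m : ℂ) • (Ω k * e 0)) :
    (∀ k, Ω k = Ω k * P0p + Ω k * P0m) ∧
    (∀ k, Complex.I • Dirac (fun k => Ω k * P0p) k = (m : ℂ) • (Ω k * P0p)) ∧
    (∀ k, Complex.I • Dirac (fun k => Ω k * P0m) k = -((m : ℂ) • (Ω k * P0m))) := by
  refine ⟨fun k => ?_, fun k => ?_, fun k => ?_⟩
  · rw [← mul_add, P0p_add_P0m, mul_one]
  · rw [joyce_mul_const hΩ, e_zero_mul_P0p]
  · rw [joyce_mul_const hΩ, e_zero_mul_P0m, mul_neg, smul_neg]
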